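/- arXiv:1209.4620 — 5 statements merged into one kernel-verified Lean document; each statement's English description precedes it below -/
import Mathlib

section
/- Suppose G = (V,E) with source s satisfies: for every partition (F, L, R) of V with s ∈ L, R nonempty, and F a feasible f-local fault set, either some node of R has at least f+1 incoming neighbors in L or R contains an out-neighbor of s. Fix a feasible f-local fault set F' with s ∉ F'. Define inductively L₀ = {s} ∪ (N⁺(s) − F'), and L_{k+1} = L_k ∪ { v ∈ V − F' − L_k : |N⁻(v) ∩ L_k| ≥ f+1 }. Then there exists k ≤ |V| such that L_k = V − F'. -/
open Finset

variable {α : Type*}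

/-- Incoming neighbors of `v` in the directed graph with edge relation `E`. -/
def inN [Fintype α] [DecidableEq α] (E : α → α → Prop) [DecidableRel E] (v : α) : Finset α :=
  univ.filter (fun u => E u v)

/-- Outgoing neighbors of `v`. -/
def outN [Fintype α] [DecidableEq α] (E : α → α → Prop) [DecidableRel E] (v : α) : Finset α :=
  univ.filter (fun u => E v u)

/-- `F` is a feasible `f`-local fault set: every node outside `F` has at most `f`
incoming neighbors inside `F`. -/
def feasibleLocal [Fintype α] [DecidableEq α] (E : α → α → Prop) [DecidableRel E]
    (f : ℕ) (F : Finset α) : Prop :=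
  ∀ v, v ∉ F → (inN E v ∩ F).card ≤ f

/-- The CPA graph condition: for every partition `(F, L, R)` of the vertex set with
`s ∈ L`, `R` nonempty and `F` a feasible `f`-local fault set, either some node of `R`
has at least `f+1` in-neighbors in `L`, or `R` contains an out-neighbor of `s`. -/
def cpaCond [Fintype α] [DecidableEq α] (E : α → α → Prop) [DecidableRel E]
    (f : ℕ) (s : α) : Prop :=
  ∀ F L R : Finset α, Disjoint F L → Disjoint F R → Disjoint L R →
    F ∪ L ∪ R = univ → s ∈ L → R.Nonempty → feasibleLocal E f F →
    (∃ v ∈ R, f + 1 ≤ (inN E v ∩ L).card) ∨ (outN E s ∩ R).Nonempty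

/-- CPA propagation sequence: `L₀ = {s} ∪ (N⁺(s) \ F')`,
`L_{k+1} = L_k ∪ { v ∈ V − F' − L_k : |N⁻(v) ∩ L_k| ≥ f+1 }`. -/
def cpaSeq [Fintype α] [DecidableEq α] (E : α → α → Prop) [DecidableRel E]
    (f : ℕ) (s : α) (F' : Finset α) : ℕ → Finset α
  | 0 => insert s (outN E s \ F')
  | k + 1 => cpaSeq E f s F' k ∪
      ((univ \ F') \ cpaSeq E f s F' k).filter
        (fun v => f + 1 ≤ (inN E v ∩ cpaSeq E f s F' k).card)

/-- under the CPA graph condition, the propagation sequence reaches all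
of V − F' within |V| rounds, for every feasible f-local fault set F' with s ∉ F'. -/
theorem stmt1 [Fintype α] [DecidableEq α] (E : α → α → Prop) [DecidableRel E]
    (hirr : ∀ v, ¬ E v v) (f : ℕ) (s : α)
    (hcond : cpaCond E f s)
    (F' : Finset α) (hF' : feasibleLocal E f F') (hs : s ∉ F') :
    ∃ k ≤ Fintype.card α, cpaSeq E f s F' k = univ \ F' := by
  set L := cpaSeq E f s F' with hL
  have hsub : ∀ k, L k ⊆ univ \ F' := by
    intro k
    induction k with
    | zero =>
      intro v hv
      simp only [hL, cpaSeq, mem_insert, mem_sdiff, mem_univ, true_and] at hv ⊢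
      rcases hv with rfl | hv
      · exact hs
      · exact hv.2
    | succ k ih =>
      intro v hv
      simp only [hL, cpaSeq, mem_union, mem_filter, mem_sdiff] at hv
      rcases hv with hv | hv
      · exact ih hv
      · simp only [mem_sdiff, mem_univ, true_and]
        exact hv.1.1.2
  have hsmem : ∀ k, s ∈ L k := by
    intro k
    induction k with
    | zero => simp [hL, cpaSeq]
    | succ k ih =>
      simp only [hL, cpaSeq, mem_union]
      exact Or.inl ih
  have hmono : ∀ k, L k ⊆ L (k + 1) := by
    intro k
    simp only [hL, cpaSeq]
    exact subset_union_left
  have h0k : ∀ k, L 0 ⊆ L k := by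
    intro k
    induction k with
    | zero => exact Finset.Subset.refl _
    | succ k ih => exact ih.trans (hmono k)
  -- growth lemma
  have hgrow : ∀ k, L k ≠ univ \ F' → ∃ v, v ∈ L (k + 1) ∧ v ∉ L k := by
    intro k hne
    set R := (univ \ F') \ L k with hR
    have hRne : R.Nonempty := by
      rw [Finset.sdiff_nonempty]
      intro hsubR
      exact hne (Finset.Subset.antisymm (hsub k) hsubR)
    have hdFL : Disjoint F' (L k) := by
      have := hsub k
      rw [Finset.disjoint_left]
      intro a ha haL
      have := this haL
      simp only [mem_sdiff] at this
      exact this.2 ha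
    have hdFR : Disjoint F' R := by
      rw [Finset.disjoint_left]
      intro a ha haR
      simp only [hR, mem_sdiff, mem_univ, true_and] at haR
      exact haR.1 ha
    have hdLR : Disjoint (L k) R := by
      rw [Finset.disjoint_left]
      intro a ha haR
      simp only [hR, mem_sdiff] at haR
      exact haR.2 ha
    have hcover : F' ∪ L k ∪ R = univ := by
      apply Finset.eq_univ_of_forall
      intro v
      by_cases hvF : v ∈ F'
      · simp [hvF]
      · by_cases hvL : v ∈ L k
        · simp [hvL]
        · simp [hR, hvF, hvL]
    rcases hcond F' (L k) R hdFL hdFR hdLR hcover (hsmem k) hRne hF' with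
      ⟨v, hvR, hvcard⟩ | ⟨v, hv⟩
    · refine ⟨v, ?_, ?_⟩
      · simp only [hL, cpaSeq, mem_union, mem_filter]
        right
        simp only [hR, mem_sdiff] at hvR
        exact ⟨by simp only [mem_sdiff]; exact ⟨hvR.1, hvR.2⟩, hvcard⟩
      · simp only [hR, mem_sdiff] at hvR
        exact hvR.2
    · -- v ∈ outN E s ∩ R; but then v ∈ L 0 ⊆ L k, contradiction
      exfalso
      simp only [mem_inter, hR, mem_sdiff, mem_univ, true_and] at hv
      have hv0 : v ∈ L 0 := by
        simp only [hL, cpaSeq, mem_insert, mem_sdiff]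
        exact Or.inr ⟨hv.1, hv.2.1⟩
      exact hv.2.2 (h0k k hv0)
  by_contra hnone
  push_neg at hnone
  have hcard : ∀ k, k ≤ Fintype.card α → k + 1 ≤ (L k).card := by
    intro k hk
    induction k with
    | zero => exact Finset.card_pos.mpr ⟨s, hsmem 0⟩
    | succ k ih =>
      have hk' : k ≤ Fintype.card α := Nat.le_of_succ_le hk
      have hne := hnone k hk'
      obtain ⟨v, hv1, hv2⟩ := hgrow k hne
      have hss : L k ⊂ L (k + 1) := ⟨hmono k, fun h => hv2 (h hv1)⟩
      have := Finset.card_lt_card hss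
      omega
  have h1 := hcard (Fintype.card α) le_rfl
  have h2 : (L (Fintype.card α)).card ≤ Fintype.card α := by
    simpa using Finset.card_le_card (Finset.subset_univ _)
  omega
end

section
/- Suppose the stabilized set L_∞ = ⋃_k L_k (with L₀ = {s} ∪ (N⁺(s) − F'), L_{k+1} = L_k ∪ { v ∉ F' ∪ L_k : |N⁻(v) ∩ L_k| ≥ f+1 }) satisfies L_∞ ≠ V − F' for some feasible f-local fault set F' with s ∉ F'. Then, setting L = L_∞ and R = V − F' − L_∞, the triple (F', L, R) is a partition of V with s ∈ L, R nonempty, F' a feasible f-local fault set, no node in R has f+1 or more incoming neighbors in L, and R contains no out-neighbor of s. -/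
open Finset

variable {α : Type*}

/-- The limit (union over all k) of the CPA propagation sequence. -/
noncomputable def cpaLimit [Fintype α] [DecidableEq α] (E : α → α → Prop) [DecidableRel E]
    (f : ℕ) (s : α) (F' : Finset α) : Finset α :=
  @Finset.filter _ (fun v => ∃ k, v ∈ cpaSeq E f s F' k) (Classical.decPred _) univ

lemma cpaSeq_mono [Fintype α] [DecidableEq α] (E : α → α → Prop) [DecidableRel E]
    (f : ℕ) (s : α) (F' : Finset α) : Monotone (cpaSeq E f s F') := by
  apply monotone_nat_of_le_succ
  intro k
  exact Finset.subset_union_left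

lemma mem_cpaLimit [Fintype α] [DecidableEq α] (E : α → α → Prop) [DecidableRel E]
    (f : ℕ) (s : α) (F' : Finset α) (v : α) :
    v ∈ cpaLimit E f s F' ↔ ∃ k, v ∈ cpaSeq E f s F' k := by
  simp [cpaLimit, Finset.mem_filter]

lemma cpaSeq_subset [Fintype α] [DecidableEq α] (E : α → α → Prop) [DecidableRel E]
    (f : ℕ) (s : α) (F' : Finset α) (hs : s ∉ F') (k : ℕ) :
    cpaSeq E f s F' k ⊆ univ \ F' := by
  induction k with
  | zero =>
    intro v hv
    simp only [cpaSeq, Finset.mem_insert, Finset.mem_sdiff] at hv ⊢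
    rcases hv with rfl | hv
    · exact ⟨mem_univ _, hs⟩
    · exact ⟨mem_univ _, hv.2⟩
  | succ k ih =>
    intro v hv
    simp only [cpaSeq, Finset.mem_union, Finset.mem_filter, Finset.mem_sdiff] at hv
    rcases hv with hv | hv
    · exact ih hv
    · exact Finset.mem_sdiff.2 hv.1.1

/-- if the propagation limit does not cover V − F', then
(F', L_∞, V − F' − L_∞) is a partition witnessing failure of the CPA condition. -/
theorem stmt4 [Fintype α] [DecidableEq α] (E : α → α → Prop) [DecidableRel E]
    (hirr : ∀ v, ¬ E v v) (f : ℕ) (s : α)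
    (F' : Finset α) (hF' : feasibleLocal E f F') (hs : s ∉ F')
    (hne : cpaLimit E f s F' ≠ univ \ F') :
    let L := cpaLimit E f s F'
    let R := (univ \ F') \ L
    Disjoint F' L ∧ Disjoint F' R ∧ Disjoint L R ∧ F' ∪ L ∪ R = univ ∧
      s ∈ L ∧ R.Nonempty ∧ feasibleLocal E f F' ∧
      (¬ ∃ v ∈ R, f + 1 ≤ (inN E v ∩ L).card) ∧ outN E s ∩ R = ∅ := by

  intro L R
  have hLsub : L ⊆ univ \ F' := by
    intro v hv
    rw [mem_cpaLimit] at hv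
    obtain ⟨k, hk⟩ := hv
    exact cpaSeq_subset E f s F' hs k hk
  have hFL : Disjoint F' L := by
    rw [Finset.disjoint_left]
    intro a ha haL
    exact (Finset.mem_sdiff.1 (hLsub haL)).2 ha
  have hFR : Disjoint F' R := by
    rw [Finset.disjoint_left]
    intro a ha haR
    exact (Finset.mem_sdiff.1 (Finset.mem_sdiff.1 haR).1).2 ha
  have hLR : Disjoint L R := Finset.disjoint_sdiff
  have hsL : s ∈ L := by
    rw [mem_cpaLimit]
    exact ⟨0, by simp [cpaSeq]⟩
  have hcover : F' ∪ L ∪ R = univ := by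
    ext v
    simp only [Finset.mem_union, Finset.mem_univ, iff_true]
    by_cases h1 : v ∈ F'
    · exact Or.inl (Or.inl h1)
    by_cases h2 : v ∈ L
    · exact Or.inl (Or.inr h2)
    exact Or.inr (Finset.mem_sdiff.2 ⟨Finset.mem_sdiff.2 ⟨mem_univ v, h1⟩, h2⟩)
  have hRne : R.Nonempty := by
    rw [Finset.sdiff_nonempty]
    intro hsub
    exact hne (Finset.Subset.antisymm hLsub hsub)
  have hclosed : ¬ ∃ v ∈ R, f + 1 ≤ (inN E v ∩ L).card := by
    rintro ⟨v, hvR, hcard⟩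
    obtain ⟨hvU, hvL⟩ := Finset.mem_sdiff.1 hvR
    -- every element of inN E v ∩ L is in some cpaSeq; take a uniform bound
    have hstage : ∃ K, inN E v ∩ L ⊆ cpaSeq E f s F' K := by
      have : ∀ u ∈ inN E v ∩ L, ∃ k, u ∈ cpaSeq E f s F' k := by
        intro u hu
        exact (mem_cpaLimit E f s F' u).1 (Finset.mem_inter.1 hu).2
      choose g hg using this
      classical
      refine ⟨(inN E v ∩ L).attach.sup (fun u => g u.1 u.2), ?_⟩
      intro u hu
      exact cpaSeq_mono E f s F'
        (Finset.le_sup (f := fun u => g u.1 u.2) (Finset.mem_attach _ ⟨u, hu⟩)) (hg u hu)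
    obtain ⟨K, hK⟩ := hstage
    have hcard2 : f + 1 ≤ (inN E v ∩ cpaSeq E f s F' K).card := by
      refine le_trans hcard (Finset.card_le_card ?_)
      intro u hu
      exact Finset.mem_inter.2 ⟨(Finset.mem_inter.1 hu).1, hK hu⟩
    have : v ∈ cpaSeq E f s F' (K + 1) := by
      simp only [cpaSeq, Finset.mem_union, Finset.mem_filter, Finset.mem_sdiff]
      right
      refine ⟨⟨Finset.mem_sdiff.1 hvU, ?_⟩, hcard2⟩
      intro hvK
      exact hvL ((mem_cpaLimit E f s F' v).2 ⟨K, hvK⟩)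
    exact hvL ((mem_cpaLimit E f s F' v).2 ⟨K + 1, this⟩)
  have hout : outN E s ∩ R = ∅ := by
    ext v
    simp only [Finset.notMem_empty, iff_false]
    intro hv
    obtain ⟨hvO, hvR⟩ := Finset.mem_inter.1 hv
    obtain ⟨hvU, hvL⟩ := Finset.mem_sdiff.1 hvR
    apply hvL
    rw [mem_cpaLimit]
    refine ⟨0, ?_⟩
    simp only [cpaSeq, Finset.mem_insert, Finset.mem_sdiff]
    exact Or.inr ⟨hvO, (Finset.mem_sdiff.1 hvU).2⟩
  exact ⟨hFL, hFR, hLR, hcover, hsL, hRne, hF', hclosed, hout⟩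
end

section
/- If the CPA graph condition holds for graph G with source s and parameter f, then every node v ≠ s with (s,v) ∉ E has at least 2f+1 incoming neighbors. -/
open Finset

variable {α : Type*}

lemma cpa_apply [Fintype α] [DecidableEq α] (E : α → α → Prop) [DecidableRel E]
    (f : ℕ) (s : α) (hcond : cpaCond E f s)
    (v : α) (hvs : v ≠ s) (hsv : ¬ E s v)
    (F : Finset α) (hvF : v ∉ F) (hsF : s ∉ F) (hF : feasibleLocal E f F) :
    f + 1 ≤ (inN E v ∩ ((univ \ F).erase v)).card := by
  set L := (univ \ F).erase v with hL
  have hDFL : Disjoint F L := by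
    simp [hL, Finset.disjoint_left]
    tauto
  have hDFR : Disjoint F {v} := by simp [hvF]
  have hDLR : Disjoint L {v} := by simp [hL]
  have hunion : F ∪ L ∪ {v} = univ := by
    ext x
    simp [hL]
    by_cases hx : x = v <;> by_cases hxF : x ∈ F <;> simp [hx, hxF]
  have hsL : s ∈ L := by simp [hL, hsF, Ne.symm hvs]
  rcases hcond F L {v} hDFL hDFR hDLR hunion hsL ⟨v, mem_singleton_self v⟩ hF with
    ⟨w, hw, hcard⟩ | ⟨w, hw⟩
  · rw [mem_singleton] at hw; subst hw; exact hcard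
  · simp only [outN, mem_inter, mem_filter, mem_univ, true_and, mem_singleton] at hw
    exact absurd (hw.2 ▸ hw.1) hsv


/-- under the CPA graph condition (and assuming every f-subset of
N⁻(v) is a feasible f-local fault set), every non-out-neighbor v ≠ s of the source
has in-degree at least 2f+1. -/
theorem stmt9 [Fintype α] [DecidableEq α] (E : α → α → Prop) [DecidableRel E]
    (hirr : ∀ v, ¬ E v v) (f : ℕ) (s : α)
    (hcond : cpaCond E f s)
    (v : α) (hvs : v ≠ s) (hsv : ¬ E s v)
    (hfeas : ∀ F : Finset α, F ⊆ inN E v → F.card = f → feasibleLocal E f F) :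
    2 * f + 1 ≤ (inN E v).card := by
  have hvnot : v ∉ inN E v := by simp [inN, hirr v]
  have hsnot : s ∉ inN E v := by simp [inN, hsv]
  by_cases hc : f ≤ (inN E v).card
  · obtain ⟨F, hFsub, hFcard⟩ := Finset.exists_subset_card_eq hc
    have hvF : v ∉ F := fun h => hvnot (hFsub h)
    have hsF : s ∉ F := fun h => hsnot (hFsub h)
    have key := cpa_apply E f s hcond v hvs hsv F hvF hsF (hfeas F hFsub hFcard)
    have hsub : inN E v ∩ ((univ \ F).erase v) ⊆ inN E v \ F := by
      intro x hx
      simp at hx ⊢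
      tauto
    have h1 : f + 1 ≤ ((inN E v) \ F).card := key.trans (card_le_card hsub)
    rw [card_sdiff_of_subset hFsub, hFcard] at h1
    omega
  · exfalso
    have hfeas0 : feasibleLocal E f (∅ : Finset α) := by
      intro w _; simp
    have key := cpa_apply E f s hcond v hvs hsv ∅ (by simp) (by simp) hfeas0
    have hsub : inN E v ∩ ((univ \ (∅:Finset α)).erase v) ⊆ inN E v :=
      inter_subset_left
    have := key.trans (card_le_card hsub)
    omega
end

section
/- Generalized fault model necessity: suppose CPA-G is correct in G, meaning for every feasible fault set F (i.e., F ⊆ F* for some F* ∈ 𝓕) playing crashed, every node outside F eventually commits. Then for every partition (F, L, R) of V with s ∈ L, R nonempty, and F a feasible fault set, either there exists v ∈ R whose set of in-neighbors in L is not contained in any F* ∈ 𝓕, or R contains an out-neighbor of s. -/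
open Finset

variable {α : Type*}

/-- F is a feasible fault set for the fault domain 𝓕. -/
def feasibleG [DecidableEq α] (𝓕 : Finset (Finset α)) (F : Finset α) : Prop :=
  ∃ Fstar ∈ 𝓕, F ⊆ Fstar

instance [DecidableEq α] (𝓕 : Finset (Finset α)) (F : Finset α) :
    Decidable (feasibleG 𝓕 F) :=
  inferInstanceAs (Decidable (∃ Fstar ∈ 𝓕, F ⊆ Fstar))

/-- CPA-G closure of {s}: add v ∉ F once (s,v) ∈ E or the set of its already-added
in-neighbors (outside F) is not a feasible fault set. -/
def cpagSeq [Fintype α] [DecidableEq α] (E : α → α → Prop) [DecidableRel E]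
    (𝓕 : Finset (Finset α)) (s : α) (F : Finset α) : ℕ → Finset α
  | 0 => {s}
  | k + 1 => cpagSeq E 𝓕 s F k ∪
      ((univ \ F) \ cpagSeq E 𝓕 s F k).filter
        (fun v => E s v ∨ ¬ feasibleG 𝓕 (inN E v ∩ cpagSeq E 𝓕 s F k))

theorem feasibleG.mono [DecidableEq α] {𝓕 : Finset (Finset α)} {A B : Finset α} (hAB : A ⊆ B)
    (hB : feasibleG 𝓕 B) : feasibleG 𝓕 A :=
  let ⟨Fstar, hmem, hBF⟩ := hB
  ⟨Fstar, hmem, hAB.trans hBF⟩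

theorem cpagSeq_subset_of_closed [Fintype α] [DecidableEq α] {E : α → α → Prop} [DecidableRel E]
    {𝓕 : Finset (Finset α)} {s : α} {F L : Finset α} (hsL : s ∈ L)
    (hclosed : ∀ v ∉ F, v ∉ L → ¬ E s v ∧ feasibleG 𝓕 (inN E v ∩ L)) :
    ∀ k, cpagSeq E 𝓕 s F k ⊆ L
  | 0 => by simpa [cpagSeq] using hsL
  | k + 1 => by
    have ih := cpagSeq_subset_of_closed hsL hclosed k
    intro v hv
    simp only [cpagSeq, mem_union, mem_filter, mem_sdiff, mem_univ, true_and] at hv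
    rcases hv with hv | ⟨⟨hvF, -⟩, hrule⟩
    · exact ih hv
    · by_contra hvL
      obtain ⟨hnotout, hfeas⟩ := hclosed v hvF hvL
      rcases hrule with hout | hinfeas
      · exact hnotout hout
      · exact hinfeas (hfeas.mono (inter_subset_inter_left ih))

theorem stmt11_general [Fintype α] [DecidableEq α] (E : α → α → Prop) [DecidableRel E]
    (𝓕 : Finset (Finset α)) (s : α)
    (hcorrect : ∀ F : Finset α, feasibleG 𝓕 F → s ∉ F →
      ∃ k, cpagSeq E 𝓕 s F k = univ \ F) :
    ∀ F L R : Finset α, Disjoint F L → Disjoint F R → Disjoint L R →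
      F ∪ L ∪ R = univ → s ∈ L → R.Nonempty → feasibleG 𝓕 F →
      (∃ v ∈ R, ¬ feasibleG 𝓕 (inN E v ∩ L)) ∨ (outN E s ∩ R).Nonempty := by
  intro F L R hFL hFR hLR hpart hsL ⟨r, hr⟩ hfeas
  by_contra! ⟨hRfeas, hnoout⟩
  have hclosed : ∀ v ∉ F, v ∉ L → ¬ E s v ∧ feasibleG 𝓕 (inN E v ∩ L) := by
    intro v hvF hvL
    have hvR : v ∈ R := by
      have hv : v ∈ F ∪ L ∪ R := by rw [hpart]; exact mem_univ v
      simp only [mem_union] at hv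
      tauto
    exact ⟨fun hout => not_nonempty_iff_eq_empty.mpr hnoout ⟨v, by simp [outN, hout, hvR]⟩,
      hRfeas v hvR⟩
  obtain ⟨k, hk⟩ := hcorrect F hfeas (disjoint_left.mp hFL · hsL)
  have hrF : r ∈ univ \ F := mem_sdiff.mpr ⟨mem_univ r, disjoint_right.mp hFR hr⟩
  have hrL : r ∈ L := cpagSeq_subset_of_closed hsL hclosed k (hk ▸ hrF)
  exact disjoint_left.mp hLR hrL hr

/-- generalized fault model, necessity: if CPA-G is correct (the
closure of {s} covers V − F for every feasible fault set F avoiding s), then for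
every partition (F, L, R) with s ∈ L, R nonempty and F feasible, either some v ∈ R
has N⁻(v) ∩ L not feasible, or R contains an out-neighbor of s. -/
theorem stmt11 [Fintype α] [DecidableEq α] (E : α → α → Prop) [DecidableRel E]
    (hirr : ∀ v, ¬ E v v) (𝓕 : Finset (Finset α)) (s : α)
    (hcorrect : ∀ F : Finset α, feasibleG 𝓕 F → s ∉ F →
      ∃ k, cpagSeq E 𝓕 s F k = univ \ F) :
    ∀ F L R : Finset α, Disjoint F L → Disjoint F R → Disjoint L R →
      F ∪ L ∪ R = univ → s ∈ L → R.Nonempty → feasibleG 𝓕 F →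
      (∃ v ∈ R, ¬ feasibleG 𝓕 (inN E v ∩ L)) ∨ (outN E s ∩ R).Nonempty :=
  stmt11_general E 𝓕 s hcorrect
end

section
/- Parameter-independent CPA validity: fix the true local fault bound f and a feasible f-local fault set F' with s ∉ F'. For any tested parameter t > f, in any propagation execution where (i) s and its fault-free out-neighbors hold x_s, (ii) a fault-free node v sets its t-entry to value x only if it received x from at least t+1 distinct in-neighbors, and (iii) faulty nodes (in F') send arbitrary values, every fault-free node's t-entry is either x_s or ⊥ (undecided). Formally: define inductively the set C_r of fault-free nodes committed to x_s by round r, with C₀ = {s}, C₁ = C₀ ∪ (N⁺(s) − F'); if a node u ∉ C_r ∪ F' receives a common value y from at least t+1 distinct in-neighbors by round r+1, where every in-neighbor outside F' that has sent a value lies in C_r (and sent x_s), and |N⁻(u) ∩ F'| ≤ f < t, then y = x_s. -/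
open Finset

variable {α : Type*}

/-- parameter-independent CPA validity, Claim 1 for CPA-P: for a
tested parameter t > f, if an uncommitted fault-free node u receives a common value
y from at least t+1 distinct in-neighbors, where every fault-free sender lies in the
committed set C r and sent x_s, then y = x_s. -/
theorem stmt13 [Fintype α] [DecidableEq α] {β : Type*} (E : α → α → Prop) [DecidableRel E]
    (hirr : ∀ v, ¬ E v v) (f t : ℕ) (s : α) (xs : β)
    (F' : Finset α) (hF' : feasibleLocal E f F') (hsF : s ∉ F')
    (hft : f < t)
    (C : ℕ → Finset α) (hC0 : C 0 = {s}) (hC1 : C 1 = insert s (outN E s \ F'))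
    (r : ℕ) (u : α) (hu : u ∉ C r ∪ F')
    (sent : α → β) (y : β)
    (S : Finset α) (hSin : S ⊆ inN E u) (hScard : t + 1 ≤ S.card)
    (hSy : ∀ w ∈ S, sent w = y)
    (hff : ∀ w ∈ S, w ∉ F' → w ∈ C r ∧ sent w = xs)
    (hfew : (inN E u ∩ F').card ≤ f) :
    y = xs := by
  have h1 : (S ∩ F').card ≤ f := le_trans (Finset.card_le_card
    (Finset.inter_subset_inter_right hSin |>.trans (subset_refl _))) hfew
  have h2 : (S \ F').Nonempty := by
    rw [← Finset.card_pos]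
    have := Finset.card_sdiff_add_card_inter S F'
    omega
  obtain ⟨w, hw⟩ := h2
  rw [Finset.mem_sdiff] at hw
  rw [← hSy w hw.1, (hff w hw.1 hw.2).2]
end
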